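/- arXiv:1203.1465 — 3 statements merged into one kernel-verified Lean document; each statement's English description precedes it below -/
import Mathlib

section
/- Let $G = \mathrm{Spin}(2r+1)$ with $r \geq 3$, and let $\lambda$ be a dominant weight with $\alpha_r \notin \mathrm{Supp}(\lambda)$ and $\mathrm{Supp}(\lambda)$ containing a long root; let $p < r$ be maximal with $\alpha_p \in \mathrm{Supp}(\lambda)$ and set $\lambda^{\mathrm{lb}}_{\mathrm{ad}} = \lambda - (\alpha_p + \cdots + \alpha_r)$. Then there is no dominant weight $\mu$ with $\mu \leq_{\mathbb{Q}} \lambda$, $\mu \neq \lambda$, and $\lambda^{\mathrm{lb}}_{\mathrm{ad}} <^{\lambda}_{\mathbb{Q}} \mu$. -/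
open Finset

/-!  Weights of `Spin(2r+1)` (type `B_r`), in coordinates with respect to the
simple roots `α_1, …, α_r` (0-indexed below, `α_{r-1}` the short root).  The
weight lattice of the simply connected group `Spin(2r+1)` consists of the
vectors all of whose coroot pairings are integers. -/

/-- The Cartan matrix of type `B_r` (0-indexed): `cartanB r i j = ⟨α_i, α_j^∨⟩`;
in particular `⟨α_{r-2}, α_{r-1}^∨⟩ = -2`. -/
def cartanB (r : ℕ) (i j : Fin r) : ℤ :=
  if i = j then 2
  else if i.val + 2 = r ∧ j.val + 1 = r then -2
  else if i.val + 1 = j.val ∨ j.val + 1 = i.val then -1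
  else 0

/-- `⟨x, α_j^∨⟩` for `x` in simple-root coordinates. -/
def pairB (r : ℕ) (x : Fin r → ℚ) (j : Fin r) : ℚ := ∑ i, x i * (cartanB r i j : ℚ)

/-- `x` is dominant. -/
def IsDomB (r : ℕ) (x : Fin r → ℚ) : Prop := ∀ j, 0 ≤ pairB r x j

/-- `x` belongs to the weight lattice of `Spin(2r+1)`. -/
def IsWtB (r : ℕ) (x : Fin r → ℚ) : Prop := ∀ j, ∃ m : ℤ, pairB r x j = m

/-- The positive roots of type `B_r` in simple-root coordinates (0-indexed):
the intervals `α_a + ⋯ + α_b` and the roots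
`α_a + ⋯ + α_{b-1} + 2α_b + ⋯ + 2α_r`. -/
def posRootsB (r : ℕ) : Set (Fin r → ℚ) :=
  {β | (∃ a b : Fin r, a ≤ b ∧ β = fun i => if a ≤ i ∧ i ≤ b then 1 else 0) ∨
       (∃ a b : Fin r, a < b ∧
         β = fun i => if b ≤ i then 2 else if a ≤ i then 1 else 0)}

/-- `Φ⁺(lam)`: the positive roots whose support meets `Supp(lam)`. -/
def PhiPlusLamB (r : ℕ) (lam : Fin r → ℚ) : Set (Fin r → ℚ) :=
  {β | β ∈ posRootsB r ∧ ∃ i, pairB r lam i ≠ 0 ∧ β i ≠ 0}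

/-- The convex cone (of rational points) generated by a set `S`. -/
def coneOfB {r : ℕ} (S : Set (Fin r → ℚ)) : Set (Fin r → ℚ) :=
  {x | ∃ (n : ℕ) (c : Fin n → ℚ) (v : Fin n → (Fin r → ℚ)),
    (∀ k, 0 ≤ c k ∧ v k ∈ S) ∧ x = ∑ k, c k • v k}

/-- Extension of a `Fin r`-indexed vector to `ℕ`, by zero. -/
def extQ (r : ℕ) (x : Fin r → ℚ) (k : ℕ) : ℚ := if h : k < r then x ⟨k, h⟩ else 0

lemma pairB_apply (r : ℕ) (hr : 3 ≤ r) (x : Fin r → ℚ) (k : ℕ) (hk : k < r) :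
    pairB r x ⟨k, hk⟩ =
      2 * extQ r x k - (if k = 0 then 0 else extQ r x (k-1))
        - extQ r x (k+1) - (if k + 1 = r then extQ r x (k-1) else 0) := by
  have hk1 : k - 1 < r := lt_of_le_of_lt (Nat.sub_le _ _) hk
  have key : ∀ i : Fin r, x i * (cartanB r i ⟨k, hk⟩ : ℚ) =
      (if (⟨k, hk⟩ : Fin r) = i then 2 * x i else 0)
      - (if k = 0 then 0 else if (⟨k-1, hk1⟩ : Fin r) = i then x i else 0)
      - (if h : k+1 < r then (if (⟨k+1, h⟩ : Fin r) = i then x i else 0) else 0)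
      - (if k + 1 = r then (if (⟨k-1, hk1⟩ : Fin r) = i then x i else 0) else 0) := by
    intro i
    simp only [cartanB, Fin.ext_iff]
    split_ifs
    all_goals try (exfalso; omega)
    all_goals push_cast
    all_goals try ring

  rw [pairB]
  simp only [key]
  rw [Finset.sum_sub_distrib, Finset.sum_sub_distrib, Finset.sum_sub_distrib]
  congr 1
  · congr 1
    · congr 1
      · rw [Finset.sum_ite_eq]; simp [extQ, hk]
      · by_cases h0 : k = 0
        · simp [h0]
        · simp only [h0, if_false]
          rw [Finset.sum_ite_eq]; simp [extQ, hk1]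
    · by_cases h1 : k + 1 < r
      · simp only [dif_pos h1]
        rw [Finset.sum_ite_eq]; simp [extQ, h1]
      · simp only [dif_neg h1]
        simp [extQ, h1]
  · by_cases h2 : k + 1 = r
    · simp only [if_pos h2]
      rw [Finset.sum_ite_eq]; simp [extQ, hk1]
    · simp [h2]
/-!
STATEMENT 11.  Let `G = Spin(2r+1)`, `r ≥ 3`, and let `lam` be a dominant
weight with `α_r ∉ Supp(lam)` and `Supp(lam)` containing a long root; let
`p < r` be maximal with `α_p ∈ Supp(lam)` and set
`λ^lb_ad = lam - (α_p + ⋯ + α_r)`.  Then there is no dominant weight `μ` of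
`Spin(2r+1)` with `μ ≤_ℚ lam`, `μ ≠ lam` and `λ^lb_ad <^lam_ℚ μ`.
-/

theorem spin_adjoint_little_brother_maximal
    (r : ℕ) (hr : 3 ≤ r)
    (lam : Fin r → ℚ) (hdom : IsDomB r lam) (hwt : IsWtB r lam)
    -- `α_r ∉ Supp(lam)`
    (hshort : pairB r lam (Fin.last (r - 1) |>.cast (by omega)) = 0)
    -- `Supp(lam)` contains a long root
    (hlong : ∃ i : Fin r, i.val + 1 < r ∧ pairB r lam i ≠ 0)
    -- `p` is the largest index with `α_p ∈ Supp(lam)`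
    (p : Fin r) (hp : pairB r lam p ≠ 0) (hpmax : ∀ i, p < i → pairB r lam i = 0) :
    ¬ ∃ μ : Fin r → ℚ, IsDomB r μ ∧ IsWtB r μ ∧
      -- `μ ≤_ℚ lam`
      (∀ i, 0 ≤ lam i - μ i) ∧ μ ≠ lam ∧
      -- `λ^lb_ad <^lam_ℚ μ`, where `λ^lb_ad = lam - (α_p + ⋯ + α_r)`
      (fun i => μ i - (lam i - (if p ≤ i then 1 else 0))) ≠ 0 ∧
      (fun i => μ i - (lam i - (if p ≤ i then 1 else 0))) ∈
        coneOfB (PhiPlusLamB r lam) := by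
  rintro ⟨μ, hμdom, hμwt, hle, hne, htne, hcone⟩
  obtain ⟨n, c, v, hcv, hveq⟩ := hcone
  -- `p` is not the last index
  have hpr : (p : ℕ) < r - 1 := by
    rcases lt_or_ge (p : ℕ) (r - 1) with h | h
    · exact h
    · exfalso; apply hp
      have hpe : p = (Fin.last (r - 1)).cast (by omega) := by
        apply Fin.ext; simp; omega
      rw [hpe]; exact hshort
  set D : ℕ → ℚ := fun k => if h : k < r then lam ⟨k, h⟩ - μ ⟨k, h⟩ else 0 with hDdef
  set S : ℕ → ℚ := fun k =>
    if h : k < r then pairB r lam ⟨k, h⟩ - pairB r μ ⟨k, h⟩ else 0 with hSdef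
  set d : ℕ → ℚ := fun k => D k - D (k + 1) with hddef
  have hpairsub : ∀ j : Fin r, pairB r (fun i => lam i - μ i) j
      = pairB r lam j - pairB r μ j := by
    intro j; simp [pairB, sub_mul, Finset.sum_sub_distrib]
  have hext : extQ r (fun i => lam i - μ i) = D := rfl
  clear_value D S d
  have hSf : ∀ k, k < r → S k = 2 * D k - (if k = 0 then 0 else D (k - 1))
      - D (k + 1) - (if k + 1 = r then D (k - 1) else 0) := by
    intro k hk
    have h := pairB_apply r hr (fun i => lam i - μ i) k hk
    rw [hpairsub, hext] at h
    simp only [hSdef]; rw [dif_pos hk]; exact h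
  have hDnn : ∀ k, 0 ≤ D k := by
    intro k; simp only [hDdef]; split_ifs with h
    · exact hle _
    · exact le_refl 0
  have hSint : ∀ k, ∃ m : ℤ, S k = m := by
    intro k; by_cases h : k < r
    · obtain ⟨m1, hm1⟩ := hwt ⟨k, h⟩; obtain ⟨m2, hm2⟩ := hμwt ⟨k, h⟩
      refine ⟨m1 - m2, ?_⟩
      simp only [hSdef]; rw [dif_pos h, hm1, hm2]; push_cast; ring
    · exact ⟨0, by simp only [hSdef]; rw [dif_neg h]; simp⟩
  have hSnp : ∀ k, (p : ℕ) < k → S k ≤ 0 := by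
    intro k hk; by_cases h : k < r
    · have h0 : pairB r lam ⟨k, h⟩ = 0 := hpmax ⟨k, h⟩ (by simpa [Fin.lt_def] using hk)
      have h1 := hμdom ⟨k, h⟩
      simp only [hSdef]; rw [dif_pos h, h0]; linarith
    · simp only [hSdef]; rw [dif_neg h]
  have hτ : ∀ i : Fin r, (if p ≤ i then (1 : ℚ) else 0) - (lam i - μ i)
      = ∑ k, c k * v k i := by
    intro i
    have h := congrFun hveq i
    simp only [Finset.sum_apply, Pi.smul_apply, smul_eq_mul] at h
    linarith [h]
  have hv0 : ∀ k (i : Fin r), 0 ≤ v k i := by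
    intro k i
    obtain ⟨hroot, -⟩ := (hcv k).2
    rcases hroot with ⟨a, b, hab, hve⟩ | ⟨a, b, hab, hve⟩ <;>
      (rw [hve]; dsimp only; split_ifs <;> norm_num)
  have hsum_nn : ∀ i : Fin r, 0 ≤ ∑ k, c k * v k i :=
    fun i => Finset.sum_nonneg fun k _ => mul_nonneg (hcv k).1 (hv0 k i)
  have hδlt : ∀ i : Fin r, i < p → lam i - μ i = 0 := by
    intro i hip
    have h1 := hτ i
    rw [if_neg (not_le.mpr hip)] at h1
    have h2 := hsum_nn i; have h3 := hle i; linarith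
  have hτlt0 : ∀ i : Fin r, i < p → ∀ k, c k * v k i = 0 := by
    intro i hip k
    have h1 := hτ i
    rw [if_neg (not_le.mpr hip), hδlt i hip] at h1
    have hs : (∑ k, c k * v k i) = 0 := by linarith
    exact (Finset.sum_eq_zero_iff_of_nonneg
      (fun k _ => mul_nonneg (hcv k).1 (hv0 k i))).mp hs k (Finset.mem_univ k)
  have hvplt : ∀ k, c k ≠ 0 → ∀ i : Fin r, i < p → v k i = 0 := by
    intro k hck i hip
    rcases mul_eq_zero.mp (hτlt0 i hip k) with h | h
    · exact absurd h hck
    · exact h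
  have hvp1 : ∀ k, c k ≠ 0 → v k p = 1 := by
    intro k hck
    obtain ⟨hroot, i0, hi0lam, hi0v⟩ := (hcv k).2
    have hi0le : i0 ≤ p := le_of_not_gt fun h => hi0lam (hpmax i0 h)
    have hi0p : i0 = p := by
      rcases lt_or_eq_of_le hi0le with h | h
      · exact absurd (hvplt k hck i0 h) hi0v
      · exact h
    rw [hi0p] at hi0v
    rcases hroot with ⟨a, b, hab, hve⟩ | ⟨a, b, hab, hve⟩
    · have hap : a ≤ p ∧ p ≤ b := by
        by_contra h; apply hi0v; rw [hve]; exact if_neg h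
      have hae : a = p := by
        rcases lt_or_eq_of_le hap.1 with h | h
        · exfalso
          have h2 := hvplt k hck a h
          rw [hve] at h2; dsimp only at h2
          rw [if_pos ⟨le_refl a, hab⟩] at h2; norm_num at h2
        · exact h
      rw [hve]; dsimp only; rw [if_pos ⟨hae.le, hap.2⟩]
    · have hap : a ≤ p := by
        by_contra h; push_neg at h
        apply hi0v; rw [hve]; dsimp only
        rw [if_neg (not_le.mpr (lt_trans h hab)), if_neg (not_le.mpr h)]
      have hae : a = p := by
        rcases lt_or_eq_of_le hap with h | h
        · exfalso
          have h2 := hvplt k hck a h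
          rw [hve] at h2; dsimp only at h2
          rw [if_neg (not_le.mpr hab), if_pos (le_refl a)] at h2; norm_num at h2
        · exact h
      rw [hve]; dsimp only
      rw [if_neg (not_le.mpr (hae ▸ hab)), if_pos hap]
  have hδle1 : ∀ i : Fin r, lam i - μ i ≤ 1 := by
    intro i
    have h1 := hτ i
    have h2 := hsum_nn i
    have h3 : (if p ≤ i then (1 : ℚ) else 0) ≤ 1 := by split_ifs <;> norm_num
    linarith
  have hDlt : ∀ k, k < (p : ℕ) → D k = 0 := by
    intro k hk
    have hkr : k < r := lt_trans hk p.isLt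
    have h := hδlt ⟨k, hkr⟩ (by simpa [Fin.lt_def] using hk)
    simp only [hDdef]; rw [dif_pos hkr, h]
  have hDub : ∀ k, D k ≤ 1 := by
    intro k; simp only [hDdef]; split_ifs with h
    · exact hδle1 _
    · norm_num
  have hDp : D (p : ℕ) = lam p - μ p := by
    simp only [hDdef]; rw [dif_pos p.isLt]
  have hSd : ∀ k, 1 ≤ k → k + 1 < r → S k = d k - d (k - 1) := by
    intro k h1 h2
    rw [hSf k (by omega)]
    rw [if_neg (by omega : ¬ k = 0), if_neg (by omega : ¬ k + 1 = r)]
    simp only [hddef]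
    rw [(by omega : k - 1 + 1 = k)]
    ring
  have hSlast : S (r - 1) = -2 * d (r - 2) := by
    rw [hSf (r - 1) (by omega)]
    rw [if_neg (by omega : ¬ r - 1 = 0), if_pos (by omega : r - 1 + 1 = r)]
    rw [(by omega : r - 1 + 1 = r)]
    have hDr : D r = 0 := by simp only [hDdef]; rw [dif_neg (by omega)]
    rw [hDr]
    simp only [hddef]
    rw [(by omega : r - 1 - 1 = r - 2), (by omega : r - 2 + 1 = r - 1)]
    ring
  have hdlast : 0 ≤ d (r - 2) := by
    have h := hSnp (r - 1) (by omega)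
    rw [hSlast] at h; linarith
  have hdstep : ∀ k, (p : ℕ) < k → k + 1 < r → d k ≤ d (k - 1) := by
    intro k hk1 hk2
    have h := hSnp k hk1
    rw [hSd k (by omega) hk2] at h; linarith
  have hdnn : ∀ k, (p : ℕ) ≤ k → k ≤ r - 2 → 0 ≤ d k := by
    have key : ∀ m k, (p : ℕ) ≤ k → k ≤ r - 2 → r - 2 - k ≤ m → 0 ≤ d k := by
      intro m
      induction m with
      | zero =>
        intro k h1 h2 h3
        rw [(by omega : k = r - 2)]; exact hdlast
      | succ m ih =>
        intro k h1 h2 h3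
        by_cases he : k = r - 2
        · rw [he]; exact hdlast
        · have h5 := ih (k + 1) (by omega) (by omega) (by omega)
          have h6 := hdstep (k + 1) (by omega) (by omega)
          rw [(by omega : k + 1 - 1 = k)] at h6
          linarith
    exact fun k h1 h2 => key (r - 2 - k) k h1 h2 le_rfl
  have hDstep : ∀ k, (p : ℕ) ≤ k → D (k + 1) ≤ D k := by
    intro k hk
    by_cases h : k ≤ r - 2
    · have h2 := hdnn k hk h; simp only [hddef] at h2; linarith
    · have h2 : D (k + 1) = 0 := by simp only [hDdef]; rw [dif_neg (by omega)]
      rw [h2]; exact hDnn k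
  have hDle : ∀ k, (p : ℕ) ≤ k → D k ≤ D (p : ℕ) := by
    intro k hk
    obtain ⟨m, rfl⟩ : ∃ m, k = (p : ℕ) + m := ⟨k - p, by omega⟩
    clear hk
    induction m with
    | zero => simp
    | succ m ih =>
      exact le_trans (hDstep ((p : ℕ) + m) (Nat.le_add_right _ _)) ih
  have hDppos : 0 < D (p : ℕ) := by
    obtain ⟨i, hi⟩ := Function.ne_iff.mp hne
    have hδi : lam i - μ i ≠ 0 := fun h => hi (by linarith [sub_eq_zero.mp h])
    have hip : p ≤ i := le_of_not_gt fun h => hδi (hδlt i h)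
    have hDi : 0 < D (i : ℕ) := by
      have h1 : D (i : ℕ) = lam i - μ i := by
        simp only [hDdef]; rw [dif_pos i.isLt]
      rw [h1]
      exact lt_of_le_of_ne (hle i) (Ne.symm hδi)
    exact lt_of_lt_of_le hDi (hDle (i : ℕ) hip)
  have hDp1 : D (p : ℕ) = 1 := by
    rcases Nat.eq_zero_or_pos (p : ℕ) with hp0 | hppos
    · -- p = 0
      rw [hp0] at hDppos ⊢
      have hT : ∀ m, 1 ≤ m → m ≤ r - 1 →
          (∑ k ∈ Finset.range m, S k) = D 0 + d (m - 1) := by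
        intro m
        induction m with
        | zero => omega
        | succ m ih =>
          intro h1 h2
          rcases Nat.eq_zero_or_pos m with h0 | hm0
          · subst h0
            rw [Finset.sum_range_one]
            have hf := hSf 0 (by omega)
            rw [if_pos rfl, if_neg (by omega : ¬ 0 + 1 = r)] at hf
            rw [hf]
            simp only [hddef]
            ring
          · rw [Finset.sum_range_succ, ih hm0 (by omega)]
            rw [hSd m hm0 (by omega)]
            rw [(by omega : m + 1 - 1 = m)]
            ring
      have hTr : D 0 = (∑ k ∈ Finset.range (r - 1), S k) + S (r - 1) / 2 := by
        rw [hT (r - 1) (by omega) le_rfl, hSlast]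
        rw [(by omega : r - 1 - 1 = r - 2)]
        ring
      have hsumint : ∀ m, ∃ M : ℤ, (∑ k ∈ Finset.range m, S k) = M := by
        intro m; induction m with
        | zero => exact ⟨0, by simp⟩
        | succ m ih =>
          obtain ⟨M, hM⟩ := ih; obtain ⟨m2, hm2⟩ := hSint m
          exact ⟨M + m2, by rw [Finset.sum_range_succ, hM, hm2]; push_cast; ring⟩
      obtain ⟨M, hM⟩ := hsumint (r - 1)
      obtain ⟨m2, hm2⟩ := hSint (r - 1)
      have h2D : 2 * D 0 = ((2 * M + m2 : ℤ) : ℚ) := by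
        rw [hTr, hM, hm2]; push_cast; ring
      have h2 : D 0 ≤ 1 := hDub 0
      have hN : (2 * M + m2 : ℤ) = 1 ∨ (2 * M + m2 : ℤ) = 2 := by
        have a1 : (0 : ℚ) < ((2 * M + m2 : ℤ) : ℚ) := by rw [← h2D]; linarith
        have a2 : ((2 * M + m2 : ℤ) : ℚ) ≤ 2 := by rw [← h2D]; linarith
        have b1 : (0 : ℤ) < 2 * M + m2 := by exact_mod_cast a1
        have b2 : (2 * M + m2 : ℤ) ≤ 2 := by exact_mod_cast a2
        omega
      rcases hN with hN | hN
      · exfalso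
        rw [hN] at h2D; push_cast at h2D
        have hD0 : D 0 = 1 / 2 := by linarith
        have hodd : ∀ k, k ≤ r - 2 → ∃ m : ℤ, 2 * d k = 2 * m + 1 := by
          intro k
          induction k with
          | zero =>
            intro _
            obtain ⟨m0, hm0⟩ := hSint 0
            have hf := hSf 0 (by omega)
            rw [if_pos rfl, if_neg (by omega : ¬ 0 + 1 = r)] at hf
            refine ⟨m0 - 1, ?_⟩
            rw [hm0] at hf
            simp only [hddef]
            push_cast
            linarith
          | succ k ih =>
            intro hk
            obtain ⟨m1, hm1⟩ := ih (by omega)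
            obtain ⟨m2', hm2'⟩ := hSint (k + 1)
            have hs := hSd (k + 1) (by omega) (by omega)
            rw [(by omega : k + 1 - 1 = k), hm2'] at hs
            refine ⟨m1 + m2', ?_⟩
            push_cast
            linarith
        have hdge : ∀ k ∈ Finset.range (r - 1), (1 : ℚ) / 2 ≤ d k := by
          intro k hk
          have hk2 : k ≤ r - 2 := by
            have := Finset.mem_range.mp hk; omega
          obtain ⟨m, hm⟩ := hodd k hk2
          have h0 : 0 ≤ d k := hdnn k (by omega) hk2
          have hm0 : 0 ≤ m := by
            by_contra hmn; push_neg at hmn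
            have : (m : ℚ) ≤ -1 := by exact_mod_cast (by omega : m ≤ -1)
            linarith
          have h1q : (0 : ℚ) ≤ (m : ℚ) := by exact_mod_cast hm0
          linarith [hm, h1q]
        have htel : (∑ k ∈ Finset.range (r - 1), d k) = D 0 - D (r - 1) := by
          simp only [hddef]
          exact Finset.sum_range_sub' D (r - 1)
        have hlb : ((r - 1 : ℕ) : ℚ) * (1 / 2) ≤ ∑ k ∈ Finset.range (r - 1), d k := by
          calc ((r - 1 : ℕ) : ℚ) * (1 / 2)
              = ∑ _k ∈ Finset.range (r - 1), (1 / 2 : ℚ) := by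
                rw [Finset.sum_const, Finset.card_range, nsmul_eq_mul]
            _ ≤ ∑ k ∈ Finset.range (r - 1), d k := Finset.sum_le_sum hdge
        have hr2 : (2 : ℚ) ≤ ((r - 1 : ℕ) : ℚ) := by
          exact_mod_cast (by omega : 2 ≤ r - 1)
        have hD0r : 0 ≤ D (r - 1) := hDnn _
        rw [htel] at hlb
        linarith
      · rw [hN] at h2D; push_cast at h2D; linarith
    · -- p ≥ 1
      obtain ⟨m, hm⟩ := hSint ((p : ℕ) - 1)
      have hf := hSf ((p : ℕ) - 1) (by omega)
      rw [if_neg (by omega : ¬ (p : ℕ) - 1 + 1 = r)] at hf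
      rw [(by omega : (p : ℕ) - 1 + 1 = (p : ℕ))] at hf
      have hd1 : D ((p : ℕ) - 1) = 0 := hDlt _ (by omega)
      have hd2 : (if (p : ℕ) - 1 = 0 then (0 : ℚ) else D ((p : ℕ) - 1 - 1)) = 0 := by
        split_ifs with h
        · rfl
        · exact hDlt _ (by omega)
      rw [hd1, hd2, hm] at hf
      have h2 : D (p : ℕ) ≤ 1 := hDub _
      have hm1 : m = -1 := by
        have a1 : (-1 : ℚ) ≤ (m : ℚ) := by linarith
        have a2 : (m : ℚ) < 0 := by linarith
        have b1 : (-1 : ℤ) ≤ m := by exact_mod_cast a1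
        have b2 : m < 0 := by exact_mod_cast a2
        omega
      rw [hm1] at hf; push_cast at hf; linarith
  -- final contradiction
  have hτp : (∑ k, c k * v k p) = 0 := by
    have h1 := hτ p
    rw [if_pos le_rfl] at h1
    rw [hDp] at hDp1
    linarith
  have hc0 : ∀ k, c k = 0 := by
    intro k
    have h := (Finset.sum_eq_zero_iff_of_nonneg
      (fun k _ => mul_nonneg (hcv k).1 (hv0 k p))).mp hτp k (Finset.mem_univ k)
    by_contra hck
    rw [hvp1 k hck] at h
    simp at h
    exact hck h
  apply htne
  funext i
  have h1 := hτ i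
  have hz : (∑ k, c k * v k i) = 0 := Finset.sum_eq_zero fun k _ => by rw [hc0 k]; ring
  rw [hz] at h1
  simp only [Pi.zero_apply]
  linarith
end

section
/- Let $G = \mathrm{SL}(5)$ with fundamental weights $\omega_1,\ldots,\omega_4$, and set $\lambda = \omega_1 + \omega_4$, $\nu = \omega_1 + \omega_2$. Then $\nu \leq_{\mathbb{Q}} 2\lambda$, but there do not exist dominant weights $\mu_1 \leq_{\mathbb{Q}} \lambda$ and $\mu_2 \leq_{\mathbb{Q}} \lambda$ such that $V(\nu) \subset V(\mu_1) \otimes V(\mu_2)$. -/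
open Finset

/-!  Weights of `SL(r+1)` (type `A_r`), in coordinates with respect to the
simple roots `α_1, …, α_r` (0-indexed below).  The weight lattice of `SL(r+1)`
consists of the vectors all of whose coroot pairings are integers. -/

/-- The Cartan matrix of type `A_r` (0-indexed). -/
def cartanA (r : ℕ) (i j : Fin r) : ℤ :=
  if i = j then 2 else if i.val + 1 = j.val ∨ j.val + 1 = i.val then -1 else 0

/-- `⟨x, α_j^∨⟩` for `x` in simple-root coordinates. -/
def pairA (r : ℕ) (x : Fin r → ℚ) (j : Fin r) : ℚ := ∑ i, x i * (cartanA r i j : ℚ)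

/-- `x` is dominant. -/
def IsDomA (r : ℕ) (x : Fin r → ℚ) : Prop := ∀ j, 0 ≤ pairA r x j

/-- `x` belongs to the weight lattice of `SL(r+1)`. -/
def IsWtA (r : ℕ) (x : Fin r → ℚ) : Prop := ∀ j, ∃ m : ℤ, pairA r x j = m

/-- `x ∈ ℕ[Δ]`: all simple-root coordinates of `x` are natural numbers. -/
def NatCoordsA {r : ℕ} (x : Fin r → ℚ) : Prop := ∀ i, ∃ m : ℕ, x i = m

/-- The fundamental weights of `SL(5)` in simple-root coordinates:
`ω_i = ∑_j c_{ij} α_j` with `c` the inverse Cartan matrix of `A_4`. -/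
def omegaSL5 (k : Fin 4) : Fin 4 → ℚ :=
  fun j => (![![4, 3, 2, 1], ![3, 6, 4, 2], ![2, 4, 6, 3], ![1, 2, 3, 4]] k j) / 5

/-!
STATEMENT 12.  Let `G = SL(5)`, `lam = ω₁ + ω₄` and `ν = ω₁ + ω₂`.  Then
`ν ≤_ℚ 2·lam`, but there exist no dominant weights `μ₁ ≤_ℚ lam` and
`μ₂ ≤_ℚ lam` with `V(ν) ⊆ V(μ₁) ⊗ V(μ₂)`.  Here `T x a b` denotes the tensor
containment relation `V(x) ⊆ V(a) ⊗ V(b)` of `SL(5)`, of which we use the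
necessary condition `T x a b → a + b - x ∈ ℕ[Δ]`.
-/

lemma pairA_explicit (x : Fin 4 → ℚ) :
    pairA 4 x 0 = 2 * x 0 - x 1 ∧ pairA 4 x 1 = -x 0 + 2 * x 1 - x 2 ∧
    pairA 4 x 2 = -x 1 + 2 * x 2 - x 3 ∧ pairA 4 x 3 = -x 2 + 2 * x 3 := by
  refine ⟨?_, ?_, ?_, ?_⟩ <;>
    simp [pairA, cartanA, Fin.sum_univ_four] <;> ring

theorem sl5_no_tensor_factorization
    (T : (Fin 4 → ℚ) → (Fin 4 → ℚ) → (Fin 4 → ℚ) → Prop)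
    -- a highest weight occurring in `V(a) ⊗ V(b)` is `≤ a + b`
    (hT : ∀ x a b, T x a b → NatCoordsA (fun i => a i + b i - x i))
    (lam ν : Fin 4 → ℚ)
    (hlam : lam = fun i => omegaSL5 0 i + omegaSL5 3 i)
    (hν : ν = fun i => omegaSL5 0 i + omegaSL5 1 i) :
    (∀ i, 0 ≤ 2 * lam i - ν i) ∧
    ¬ ∃ μ₁ μ₂ : Fin 4 → ℚ,
        IsDomA 4 μ₁ ∧ IsWtA 4 μ₁ ∧ (∀ i, 0 ≤ lam i - μ₁ i) ∧
        IsDomA 4 μ₂ ∧ IsWtA 4 μ₂ ∧ (∀ i, 0 ≤ lam i - μ₂ i) ∧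
        T ν μ₁ μ₂ := by
  subst hlam hν
  have hlamv : ∀ i : Fin 4, (omegaSL5 0 i + omegaSL5 3 i) = 1 := by
    intro i; fin_cases i <;> norm_num [omegaSL5, Matrix.cons_val_three]
  have hνv : (omegaSL5 0 0 + omegaSL5 1 0 = 7/5) ∧ (omegaSL5 0 1 + omegaSL5 1 1 = 9/5) ∧
      (omegaSL5 0 2 + omegaSL5 1 2 = 6/5) ∧ (omegaSL5 0 3 + omegaSL5 1 3 = 3/5) := by
    refine ⟨?_, ?_, ?_, ?_⟩ <;> norm_num [omegaSL5, Matrix.cons_val_two, Matrix.cons_val_three]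
  obtain ⟨hν0, hν1, hν2, hν3⟩ := hνv
  constructor
  · intro i; fin_cases i <;> norm_num [omegaSL5, Matrix.cons_val_three]
  rintro ⟨μ₁, μ₂, hd1, hw1, hle1, hd2, hw2, hle2, hTν⟩
  have hn := hT _ _ _ hTν
  -- coordinate bounds
  have hb1 : ∀ i, μ₁ i ≤ 1 := fun i => by have := hle1 i; simp only at this; rw [hlamv i] at this; linarith
  have hb2 : ∀ i, μ₂ i ≤ 1 := fun i => by have := hle2 i; simp only at this; rw [hlamv i] at this; linarith
  -- the natural coordinates of μ₁ + μ₂ - ν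
  have hs : ∀ i : Fin 4, ∃ m : ℕ, μ₁ i + μ₂ i - (omegaSL5 0 i + omegaSL5 1 i) = m := hn
  obtain ⟨m0, hm0⟩ := hs 0
  obtain ⟨m1, hm1⟩ := hs 1
  obtain ⟨m2, hm2⟩ := hs 2
  obtain ⟨m3, hm3⟩ := hs 3
  rw [hν0] at hm0; rw [hν1] at hm1; rw [hν2] at hm2; rw [hν3] at hm3
  have hm0z : m0 = 0 := by
    by_contra h
    have : (1 : ℚ) ≤ (m0 : ℚ) := by exact_mod_cast Nat.one_le_iff_ne_zero.mpr h
    have := hb1 0; have := hb2 0; linarith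
  have hm1z : m1 = 0 := by
    by_contra h
    have : (1 : ℚ) ≤ (m1 : ℚ) := by exact_mod_cast Nat.one_le_iff_ne_zero.mpr h
    have := hb1 1; have := hb2 1; linarith
  have hm2z : m2 = 0 := by
    by_contra h
    have : (1 : ℚ) ≤ (m2 : ℚ) := by exact_mod_cast Nat.one_le_iff_ne_zero.mpr h
    have := hb1 2; have := hb2 2; linarith
  subst hm0z hm1z hm2z
  push_cast at hm0 hm1 hm2
  -- explicit pairings
  obtain ⟨p10, p11, p12, p13⟩ := pairA_explicit μ₁
  obtain ⟨p20, p21, p22, p23⟩ := pairA_explicit μ₂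
  have d10 := hd1 0; have d11 := hd1 1; have d12 := hd1 2; have d13 := hd1 3
  have d20 := hd2 0; have d21 := hd2 1; have d22 := hd2 2; have d23 := hd2 3
  rw [p10] at d10; rw [p11] at d11; rw [p12] at d12; rw [p13] at d13
  rw [p20] at d20; rw [p21] at d21; rw [p22] at d22; rw [p23] at d23
  -- rule out m3 = 1 (or more): pairing at node 2 would be negative
  have hm3z : m3 = 0 := by
    by_contra h
    have : (1 : ℚ) ≤ (m3 : ℚ) := by exact_mod_cast Nat.one_le_iff_ne_zero.mpr h
    have := hb1 3; have := hb2 3; linarith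
  subst hm3z
  push_cast at hm3
  -- so μ₁ + μ₂ = ν; node-2 and node-3 pairings of each vanish
  have e12 : -μ₁ 1 + 2 * μ₁ 2 - μ₁ 3 = 0 := by linarith
  have e13 : -μ₁ 2 + 2 * μ₁ 3 = 0 := by linarith
  have e22 : -μ₂ 1 + 2 * μ₂ 2 - μ₂ 3 = 0 := by linarith
  have e23 : -μ₂ 2 + 2 * μ₂ 3 = 0 := by linarith
  -- integral pairings at nodes 0 and 1
  obtain ⟨a, ha⟩ := hw1 0
  obtain ⟨b, hb⟩ := hw1 1
  rw [p10] at ha; rw [p11] at hb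
  have ha0 : (0:ℚ) ≤ a := by rw [← ha]; exact d10
  have ha1 : (a:ℚ) ≤ 1 := by rw [← ha]; linarith
  have hb0 : (0:ℚ) ≤ b := by rw [← hb]; exact d11
  have hb1' : (b:ℚ) ≤ 1 := by rw [← hb]; linarith
  have ha0' : 0 ≤ a := by exact_mod_cast ha0
  have ha1' : a ≤ 1 := by exact_mod_cast ha1
  have hb0' : 0 ≤ b := by exact_mod_cast hb0
  have hb1'' : b ≤ 1 := by exact_mod_cast hb1'
  -- solve for μ₁ 1 and μ₂ 1
  have h11 : μ₁ 1 = (3 * (a:ℚ) + 6 * (b:ℚ)) / 5 := by linarith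
  have h21 : μ₂ 1 = (9 - 3 * (a:ℚ) - 6 * (b:ℚ)) / 5 := by linarith
  have hμ11 := hb1 1
  have hμ21 := hb2 1
  interval_cases a <;> interval_cases b <;> push_cast at h11 h21 <;> linarith
end

section
/- Let $G = \mathrm{SL}(r+1)$ and $\lambda = n\omega_1$ with $n \geq 1$. Then the set of dominant weights $\mu$ with $\mu \leq_{\mathbb{Q}} \lambda$ that are maximal with respect to $\leq^{\lambda}$ equals $\{(n-i)\omega_1 : 0 \leq i \leq \min\{n,r\}\}$. -/
open Finset

/-- `x ∈ ℕ[S]`. -/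
def InNatSpanA {r : ℕ} (S : Set (Fin r → ℚ)) (x : Fin r → ℚ) : Prop :=
  x ∈ AddSubmonoid.closure S

/-- The fundamental weight `ω₁` of `SL(r+1)` in simple-root coordinates:
`ω₁ = (r·α₁ + (r-1)·α₂ + ⋯ + α_r)/(r+1)`. -/
def omegaOne (r : ℕ) : Fin r → ℚ := fun i => ((r : ℚ) - i.val) / ((r : ℚ) + 1)

/-- `Φ⁺(n·ω₁)` in type `A_r`: the positive roots whose support contains `α₁`,
i.e. the roots `α₁ + ⋯ + α_j` for `1 ≤ j ≤ r`. -/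
def PhiPlusOmegaOne (r : ℕ) : Set (Fin r → ℚ) :=
  {β | ∃ j : Fin r, β = fun i => if i ≤ j then 1 else 0}

/-!
STATEMENT 13.  Let `G = SL(r+1)` and `lam = n·ω₁` with `n ≥ 1`.  Then the set
of dominant weights `μ` of `G` with `μ ≤_ℚ lam` which are maximal with respect
to `≤^lam` equals `{(n-i)·ω₁ : 0 ≤ i ≤ min n r}`.
-/


namespace AuxMax

/-- Extend a vector to `ℕ` by zero. -/
def E (r : ℕ) (x : Fin r → ℚ) (k : ℕ) : ℚ := if h : k < r then x ⟨k, h⟩ else 0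

lemma pairE {r : ℕ} (x : Fin r → ℚ) (j : Fin r) :
    pairA r x j = 2 * E r x j.val - (if j.val = 0 then 0 else E r x (j.val - 1))
      - E r x (j.val + 1) := by
  have hsum : ∀ i : Fin r, x i * (cartanA r i j : ℚ)
      = (if i = j then 2 * x i else 0) + (if i.val + 1 = j.val then -(x i) else 0)
        + (if j.val + 1 = i.val then -(x i) else 0) := by
    intro i
    unfold cartanA
    by_cases h1 : i = j
    · subst h1
      have h2 : ¬ (i.val + 1 = i.val) := by omega
      simp [h2]; ring
    · have h1' : ¬ (i.val = j.val) := fun h => h1 (Fin.ext h)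
      by_cases h2 : i.val + 1 = j.val
      · have h3 : ¬ (j.val + 1 = i.val) := by omega
        simp [h1, h2, h3]
      · by_cases h3 : j.val + 1 = i.val
        · simp [h1, h2, h3]
        · simp [h1, h2, h3]
  rw [pairA, Finset.sum_congr rfl fun i _ => hsum i, Finset.sum_add_distrib,
    Finset.sum_add_distrib]
  have e1 : (∑ i : Fin r, if i = j then 2 * x i else 0) = 2 * E r x j.val := by
    rw [Finset.sum_ite_eq' Finset.univ j (fun i => 2 * x i)]
    simp [E, j.isLt]
  have e2 : (∑ i : Fin r, if i.val + 1 = j.val then -(x i) else 0)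
      = -(if j.val = 0 then 0 else E r x (j.val - 1)) := by
    by_cases h0 : j.val = 0
    · rw [if_pos h0, Finset.sum_eq_zero]
      · simp
      · intro i _
        rw [if_neg (by omega)]
    · rw [if_neg h0]
      have hlt : j.val - 1 < r := by omega
      rw [Finset.sum_eq_single (⟨j.val - 1, hlt⟩ : Fin r)]
      · rw [if_pos (by simp; omega)]
        simp [E, hlt]
      · intro b _ hb
        rw [if_neg]
        intro hc
        exact hb (Fin.ext (by simp; omega))
      · simp
  have e3 : (∑ i : Fin r, if j.val + 1 = i.val then -(x i) else 0)
      = -(E r x (j.val + 1)) := by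
    by_cases h0 : j.val + 1 < r
    · rw [Finset.sum_eq_single (⟨j.val + 1, h0⟩ : Fin r)]
      · rw [if_pos (by simp)]
        simp [E, h0]
      · intro b _ hb
        rw [if_neg]
        intro hc
        exact hb (Fin.ext (by simp; omega))
      · simp
    · rw [Finset.sum_eq_zero, E, dif_neg h0, neg_zero]
      intro i _
      rw [if_neg (by omega)]
  rw [e1, e2, e3]
  ring

lemma E_lt {r : ℕ} (x : Fin r → ℚ) {k : ℕ} (h : k < r) : E r x k = x ⟨k, h⟩ := dif_pos h

lemma E_ge {r : ℕ} (x : Fin r → ℚ) {k : ℕ} (h : ¬ k < r) : E r x k = 0 := dif_neg h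

lemma pairA_add {r : ℕ} (x y : Fin r → ℚ) (j : Fin r) :
    pairA r (x + y) j = pairA r x j + pairA r y j := by
  simp [pairA, add_mul, Finset.sum_add_distrib]

lemma pairA_sub {r : ℕ} (x y : Fin r → ℚ) (j : Fin r) :
    pairA r (x - y) j = pairA r x j - pairA r y j := by
  simp [pairA, sub_mul, Finset.sum_sub_distrib]

lemma pairA_smul {r : ℕ} (c : ℚ) (x : Fin r → ℚ) (j : Fin r) :
    pairA r (c • x) j = c * pairA r x j := by
  simp only [pairA, Finset.mul_sum, Pi.smul_apply, smul_eq_mul, mul_assoc]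

end AuxMax

namespace AuxMax

lemma E_omega {r : ℕ} (k : ℕ) :
    E r (omegaOne r) k = if k < r then ((r : ℚ) - k) / ((r : ℚ) + 1) else 0 := by
  by_cases h : k < r
  · rw [E_lt _ h, if_pos h]; rfl
  · rw [E_ge _ h, if_neg h]

lemma pair_omega {r : ℕ} (j : Fin r) :
    pairA r (omegaOne r) j = if j.val = 0 then 1 else 0 := by
  have hr : 0 < r := j.pos
  have hr1 : (r : ℚ) + 1 ≠ 0 := by positivity
  rw [pairE]
  by_cases h0 : j.val = 0
  · rw [if_pos h0, if_pos h0, h0]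
    by_cases h1 : 1 < r
    · rw [E_omega, E_omega, if_pos hr, if_pos h1]
      push_cast
      field_simp
      ring
    · have hr1' : r = 1 := by omega
      subst hr1'
      rw [E_omega, E_omega, if_pos hr, if_neg (by omega)]
      norm_num
  · rw [if_neg h0, if_neg h0]
    have hjr : j.val < r := j.isLt
    have hcast : ((j.val - 1 : ℕ) : ℚ) = (j.val : ℚ) - 1 := by
      have : 1 ≤ j.val := by omega
      push_cast [this]
      ring
    by_cases h1 : j.val + 1 < r
    · rw [E_omega, E_omega, E_omega, if_pos hjr, if_pos h1, if_pos (by omega)]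
      push_cast [hcast]
      field_simp
      ring
    · have hlast : j.val + 1 = r := by omega
      rw [E_omega, E_omega, E_omega, if_pos hjr, if_neg h1, if_pos (by omega)]
      push_cast [hcast]
      have hj1 : ((j.val : ℚ)) + 1 = (r : ℚ) := by exact_mod_cast hlast
      have hj2 : (j.val : ℚ) = (r : ℚ) - 1 := by linarith
      rw [hj2]
      field_simp
      ring
end AuxMax

namespace AuxMax

/-- downward chain: if `f (j-1) ≥ f j` for `1 ≤ j ≤ N` then `f j ≥ f N` for `j ≤ N`. -/
lemma chain (f : ℕ → ℚ) (N : ℕ) (h : ∀ j, 1 ≤ j → j ≤ N → f j ≤ f (j - 1)) :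
    ∀ j, j ≤ N → f N ≤ f j := by
  have key : ∀ m : ℕ, ∀ j : ℕ, j + m = N → f N ≤ f j := by
    intro m
    induction m with
    | zero =>
      intro j hj
      have : j = N := by omega
      subst this
      exact le_refl _
    | succ m ih =>
      intro j hj
      have h1 := h (j + 1) (by omega) (by omega)
      have h2 := ih (j + 1) (by omega)
      simp only [Nat.add_sub_cancel] at h1
      linarith
  intro j hj
  exact key (N - j) j (by omega)

lemma chain' (f : ℕ → ℚ) (N : ℕ) (h : ∀ j, 1 ≤ j → j ≤ N → f (j - 1) ≤ f j) :
    ∀ j, j ≤ N → f j ≤ f N := by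
  intro j hj
  simpa using chain (fun k => -(f k)) N (fun j h1 h2 => by simpa using h j h1 h2) j hj

/-- Reconstruction: zero pairings away from node 0 force a multiple of `ω₁`. -/
lemma recon {r : ℕ} (x : Fin r → ℚ) (h : ∀ j : Fin r, 1 ≤ j.val → pairA r x j = 0) :
    ∀ m : ℕ, m ≤ r → E r x (r - m) = (m : ℚ) * E r x (r - 1) := by
  intro m
  induction m using Nat.strong_induction_on with
  | _ m ih =>
    match m with
    | 0 => intro _; rw [E_ge x (by omega)]; simp
    | 1 => intro _; simp
    | (t + 2) =>
      intro hm
      have hj : r - (t + 1) < r := by omega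
      have hj1 : 1 ≤ r - (t + 1) := by omega
      have hp := h ⟨r - (t + 1), hj⟩ hj1
      rw [pairE] at hp
      simp only [if_neg (by omega : ¬ (r - (t+1)) = 0)] at hp
      have i1 : r - (t + 1) - 1 = r - (t + 2) := by omega
      have i2 : r - (t + 1) + 1 = r - t := by omega
      rw [i1, i2] at hp
      have e1 := ih (t + 1) (by omega) (by omega)
      have e2 := ih t (by omega) (by omega)
      rw [e1, e2] at hp
      push_cast
      push_cast at hp
      linarith

/-- If all the "discrete derivatives" vanish then `x = 0`. -/
lemma zero_of_flat {r : ℕ} (x : Fin r → ℚ)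
    (h : ∀ k, k < r → E r x k = E r x (k + 1)) : ∀ k, E r x k = 0 := by
  have key : ∀ m : ℕ, ∀ k : ℕ, k + m = r → E r x k = 0 := by
    intro m
    induction m with
    | zero => intro k hk; exact E_ge x (by omega)
    | succ m ih =>
      intro k hk
      rw [h k (by omega)]
      exact ih (k + 1) (by omega)
  intro k
  by_cases hk : k < r
  · exact key (r - k) k (by omega)
  · exact E_ge x hk

end AuxMax

namespace AuxMax

def betaA (r : ℕ) (j : Fin r) : Fin r → ℚ := fun i => if i ≤ j then 1 else 0

lemma betaA_mem {r : ℕ} (j : Fin r) : betaA r j ∈ PhiPlusOmegaOne r := ⟨j, rfl⟩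

lemma E_beta {r : ℕ} (j : Fin r) (k : ℕ) :
    E r (betaA r j) k = if k ≤ j.val then 1 else 0 := by
  by_cases h : k < r
  · rw [E_lt _ h]
    simp only [betaA, Fin.le_def]
  · rw [E_ge _ h, if_neg (by have := j.isLt; omega)]

lemma pair_beta {r : ℕ} (j m : Fin r) :
    pairA r (betaA r j) m = (if m.val = 0 then 1 else 0) + (if m.val = j.val then 1 else 0)
      - (if m.val = j.val + 1 then 1 else 0) := by
  have hm := m.isLt
  have hj := j.isLt
  rw [pairE, E_beta, E_beta, E_beta]
  split_ifs <;> first | omega | norm_num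

lemma closure_props {r : ℕ} {x : Fin r → ℚ}
    (hx : x ∈ AddSubmonoid.closure (PhiPlusOmegaOne r)) :
    (∀ i, ∃ m : ℕ, x i = m) ∧ (∀ i j : Fin r, i ≤ j → x j ≤ x i) := by
  induction hx using AddSubmonoid.closure_induction with
  | mem x hxm =>
    obtain ⟨j, rfl⟩ := hxm
    constructor
    · intro i
      by_cases h : i ≤ j
      · exact ⟨1, by simp [h]⟩
      · exact ⟨0, by simp [h]⟩
    · intro i i' hii'
      by_cases h : i' ≤ j
      · simp [h, le_trans hii' h]
      · by_cases h2 : i ≤ j <;> simp [h, h2]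
  | zero => exact ⟨fun i => ⟨0, by simp⟩, fun i j _ => by simp⟩
  | add x y hx hy ihx ihy =>
    constructor
    · intro i
      obtain ⟨a, ha⟩ := ihx.1 i
      obtain ⟨b, hb⟩ := ihy.1 i
      exact ⟨a + b, by simp [ha, hb]⟩
    · intro i j hij
      have := ihx.2 i j hij
      have := ihy.2 i j hij
      simp only [Pi.add_apply]
      linarith

end AuxMax

namespace AuxMax

lemma pairE_diff {r : ℕ} (x : Fin r → ℚ) {k : ℕ} (h1 : 1 ≤ k) (hk : k < r) :
    pairA r x ⟨k, hk⟩ = (E r x k - E r x (k + 1)) - (E r x (k - 1) - E r x k) := by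
  rw [pairE]
  simp only [if_neg (by omega : ¬ k = 0)]
  ring

lemma step_up {r : ℕ} (n : ℕ) (μ : Fin r → ℚ) (j0 : Fin r)
    (hdom : IsDomA r μ) (hwt : IsWtA r μ)
    (hlmu : ∀ i, 0 ≤ (n : ℚ) * omegaOne r i - μ i)
    (hstep : ∀ m : Fin r, m.val = j0.val + 1 → 1 ≤ pairA r μ m)
    (hnu : ∀ idx : Fin r, idx.val ≤ j0.val → 1 ≤ (n : ℚ) * omegaOne r idx - μ idx) :
    (IsDomA r (μ + betaA r j0) ∧ IsWtA r (μ + betaA r j0) ∧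
      (∀ i, 0 ≤ (n : ℚ) * omegaOne r i - (μ + betaA r j0) i)) ∧
    InNatSpanA (PhiPlusOmegaOne r) ((μ + betaA r j0) - μ) := by
  refine ⟨⟨?_, ?_, ?_⟩, ?_⟩
  · intro m
    rw [pairA_add, pair_beta]
    by_cases hm : m.val = j0.val + 1
    · rw [if_neg (by omega), if_neg (by omega), if_pos hm]
      have := hstep m hm
      linarith
    · rw [if_neg hm]
      have := hdom m
      split_ifs <;> linarith
  · intro m
    obtain ⟨z, hz⟩ := hwt m
    refine ⟨z + (if m.val = 0 then 1 else 0) + (if m.val = j0.val then 1 else 0)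
      - (if m.val = j0.val + 1 then 1 else 0), ?_⟩
    rw [pairA_add, pair_beta, hz]
    split_ifs <;> push_cast <;> ring
  · intro idx
    simp only [Pi.add_apply, betaA]
    by_cases hle : idx ≤ j0
    · rw [if_pos hle]
      have := hnu idx (Fin.le_def.mp hle)
      linarith
    · rw [if_neg hle]
      have := hlmu idx
      linarith
  · rw [add_sub_cancel_left]
    exact AddSubmonoid.subset_closure (betaA_mem j0)

lemma contra_step {r : ℕ} (n : ℕ) (μ : Fin r → ℚ) (j0 : Fin r)
    (hdom : IsDomA r μ) (hwt : IsWtA r μ)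
    (hlmu : ∀ i, 0 ≤ (n : ℚ) * omegaOne r i - μ i)
    (hstep : ∀ m : Fin r, m.val = j0.val + 1 → 1 ≤ pairA r μ m)
    (hnu : ∀ idx : Fin r, idx.val ≤ j0.val → 1 ≤ (n : ℚ) * omegaOne r idx - μ idx)
    (hmax : ∀ μ' : Fin r → ℚ,
      (IsDomA r μ' ∧ IsWtA r μ' ∧ (∀ i, 0 ≤ (n : ℚ) * omegaOne r i - μ' i)) →
      InNatSpanA (PhiPlusOmegaOne r) (μ' - μ) → μ' = μ) : False := by
  obtain ⟨hcond, hspan⟩ := step_up n μ j0 hdom hwt hlmu hstep hnu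
  have heq := hmax _ hcond hspan
  have := congrFun heq j0
  simp only [Pi.add_apply, betaA, if_pos (le_refl j0)] at this
  linarith

end AuxMax

namespace AuxMax

lemma omega_nonneg {r : ℕ} (k : Fin r) : 0 ≤ omegaOne r k := by
  have hk := k.isLt
  have h1 : (k.val : ℚ) ≤ (r : ℚ) := by exact_mod_cast hk.le
  have h2 : (0:ℚ) < (r:ℚ) + 1 := by positivity
  exact div_nonneg (by linarith) h2.le

lemma backward {r n : ℕ} (hr : 1 ≤ r) (i : ℕ) (hi : i ≤ min n r) :
    (IsDomA r (((n - i : ℕ) : ℚ) • omegaOne r) ∧ IsWtA r (((n - i : ℕ) : ℚ) • omegaOne r) ∧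
      (∀ k, 0 ≤ (n : ℚ) * omegaOne r k - (((n - i : ℕ) : ℚ) • omegaOne r) k)) ∧
    (∀ μ' : Fin r → ℚ,
      (IsDomA r μ' ∧ IsWtA r μ' ∧ (∀ k, 0 ≤ (n : ℚ) * omegaOne r k - μ' k)) →
      InNatSpanA (PhiPlusOmegaOne r) (μ' - ((n - i : ℕ) : ℚ) • omegaOne r) →
      μ' = ((n - i : ℕ) : ℚ) • omegaOne r) := by
  set c : ℚ := ((n - i : ℕ) : ℚ) with hc
  have hin : i ≤ n := le_trans hi (min_le_left _ _)
  have hirr : i ≤ r := le_trans hi (min_le_right _ _)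
  have hcnn : 0 ≤ c := Nat.cast_nonneg _
  have hni : (n : ℚ) - c = (i : ℚ) := by
    rw [hc]
    push_cast [hin]
    ring
  have pairμ : ∀ j : Fin r, pairA r (c • omegaOne r) j = c * (if j.val = 0 then 1 else 0) := by
    intro j
    rw [pairA_smul, pair_omega]
  refine ⟨⟨?_, ?_, ?_⟩, ?_⟩
  · intro j
    rw [pairμ]
    split_ifs <;> simp [hcnn]
  · intro j
    refine ⟨if j.val = 0 then ((n - i : ℕ) : ℤ) else 0, ?_⟩
    rw [pairμ]
    split_ifs <;> push_cast <;> ring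
  · intro k
    have : (n : ℚ) * omegaOne r k - (c • omegaOne r) k = (i : ℚ) * omegaOne r k := by
      simp only [Pi.smul_apply, smul_eq_mul]
      rw [← hni]
      ring
    rw [this]
    exact mul_nonneg (Nat.cast_nonneg _) (omega_nonneg k)
  · intro μ' ⟨hdom', hwt', hle'⟩ hspan
    set x : Fin r → ℚ := μ' - c • omegaOne r with hx
    have props := closure_props (hspan : x ∈ AddSubmonoid.closure (PhiPlusOmegaOne r))
    have hxnn : ∀ idx, 0 ≤ x idx := by
      intro idx
      obtain ⟨m, hm⟩ := props.1 idx
      rw [hm]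
      exact Nat.cast_nonneg _
    have hrlt : r - 1 < r := by omega
    set L : Fin r := ⟨r - 1, hrlt⟩ with hL
    have homL : omegaOne r L = 1 / ((r : ℚ) + 1) := by
      unfold omegaOne
      have : ((L : ℕ) : ℚ) = (r : ℚ) - 1 := by
        rw [hL]
        push_cast [hr]
        ring
      rw [this]
      ring_nf
    have hlast0 : x L = 0 := by
      obtain ⟨m, hm⟩ := props.1 L
      have hub : x L ≤ (i : ℚ) / ((r : ℚ) + 1) := by
        have h1 := hle' L
        have : x L = μ' L - c * omegaOne r L := by simp [hx]
        rw [this, homL]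
        rw [homL] at h1
        have : (i:ℚ) / ((r:ℚ)+1) = ((n:ℚ) - c) * (1 / ((r:ℚ)+1)) := by
          rw [hni]; ring
        rw [this]
        linarith
      have hlt1 : (i : ℚ) / ((r : ℚ) + 1) < 1 := by
        rw [div_lt_one (by positivity)]
        have : (i : ℚ) ≤ (r : ℚ) := by exact_mod_cast hirr
        linarith
      rw [hm] at hub ⊢
      have : m < 1 := by exact_mod_cast lt_of_le_of_lt hub hlt1
      interval_cases m
      simp
    set D : ℕ → ℚ := fun k => E r x k - E r x (k + 1) with hD
    have hDnn : ∀ k, k < r → 0 ≤ D k := by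
      intro k hk
      by_cases hk1 : k + 1 < r
      · have := props.2 ⟨k, hk⟩ ⟨k + 1, hk1⟩ (Fin.mk_le_mk.mpr (by omega))
        simp only [hD]
        rw [E_lt x hk, E_lt x hk1]
        linarith
      · simp only [hD]
        rw [E_ge x hk1, E_lt x hk]
        have := hxnn ⟨k, hk⟩
        linarith
    have hDlast : D (r - 1) = 0 := by
      simp only [hD]
      rw [E_ge x (by omega : ¬ r - 1 + 1 < r), E_lt x hrlt]
      rw [show (⟨r-1, hrlt⟩ : Fin r) = L from rfl, hlast0]
      ring
    have hmono : ∀ m, 1 ≤ m → m ≤ r - 1 → D (m - 1) ≤ D m := by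
      intro m h1 h2
      have hmr : m < r := by omega
      have hpx : 0 ≤ pairA r x ⟨m, hmr⟩ := by
        have : pairA r x ⟨m, hmr⟩ = pairA r μ' ⟨m, hmr⟩ - pairA r (c • omegaOne r) ⟨m, hmr⟩ := by
          rw [hx, pairA_sub]
        rw [this, pairμ, if_neg (by omega : ¬ m = 0)]
        have := hdom' ⟨m, hmr⟩
        linarith
      rw [pairE_diff x h1 hmr] at hpx
      simp only [hD]
      rw [show m - 1 + 1 = m from by omega]
      linarith
    have hDzero : ∀ k, k < r → D k = 0 := by
      intro k hk
      have h1 := chain' D (r - 1) hmono k (by omega)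
      have h2 := hDnn k hk
      rw [hDlast] at h1
      linarith
    have hEzero := zero_of_flat x (fun k hk => by
      have := hDzero k hk
      simp only [hD] at this
      linarith)
    funext idx
    have h0 : x idx = 0 := by
      have := hEzero idx.val
      rwa [E_lt x idx.isLt, Fin.eta] at this
    have : μ' idx - (c • omegaOne r) idx = 0 := h0
    have h2 : (c • omegaOne r) idx = c * omegaOne r idx := rfl
    simp only [Pi.smul_apply, smul_eq_mul]
    linarith [this, h2]

end AuxMax

namespace AuxMax

lemma forward {r n : ℕ} (hr : 1 ≤ r) (μ : Fin r → ℚ)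
    (hdom : IsDomA r μ) (hwt : IsWtA r μ)
    (hle : ∀ k, 0 ≤ (n : ℚ) * omegaOne r k - μ k)
    (hmax : ∀ μ' : Fin r → ℚ,
      (IsDomA r μ' ∧ IsWtA r μ' ∧ (∀ k, 0 ≤ (n : ℚ) * omegaOne r k - μ' k)) →
      InNatSpanA (PhiPlusOmegaOne r) (μ' - μ) → μ' = μ) :
    ∃ i : ℕ, i ≤ min n r ∧ μ = ((n - i : ℕ) : ℚ) • omegaOne r := by
  set ν : Fin r → ℚ := (n : ℚ) • omegaOne r - μ with hνdef
  have hν : ∀ k : Fin r, ν k = (n : ℚ) * omegaOne r k - μ k := by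
    intro k; simp [hνdef]
  have pairν : ∀ j : Fin r, pairA r ν j
      = (if j.val = 0 then (n : ℚ) else 0) - pairA r μ j := by
    intro j
    rw [hνdef, pairA_sub, pairA_smul, pair_omega]
    split_ifs <;> ring
  set e : ℕ → ℚ := fun k => E r ν k - E r ν (k + 1) with he
  have hemono : ∀ j, 1 ≤ j → j ≤ r - 1 → e j ≤ e (j - 1) := by
    intro j h1 h2
    have hjr : j < r := by omega
    have hp := pairE_diff ν h1 hjr
    have hp2 := pairν ⟨j, hjr⟩
    rw [if_neg (by omega : ¬ j = 0)] at hp2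
    have h3 := hdom ⟨j, hjr⟩
    simp only [he]
    rw [show j - 1 + 1 = j from by omega]
    rw [hp2] at hp
    linarith
  have hrlt : r - 1 < r := by omega
  have hennneg : ∀ k, k ≤ r - 1 → 0 ≤ e k := by
    intro k hk
    have h1 := chain e (r - 1) hemono k hk
    have h2 : 0 ≤ e (r - 1) := by
      simp only [he]
      rw [E_ge ν (by omega : ¬ r - 1 + 1 < r), E_lt ν hrlt]
      have := hle ⟨r - 1, hrlt⟩
      rw [← hν ⟨r - 1, hrlt⟩] at this
      linarith
    linarith
  have hpzero : ∀ k : Fin r, 1 ≤ k.val → pairA r μ k = 0 := by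
    intro k hk1
    by_contra hne
    have hk1' : 1 ≤ pairA r μ k := by
      obtain ⟨z, hz⟩ := hwt k
      have h0 := hdom k
      rw [hz] at h0 hne ⊢
      have hz0 : 0 ≤ z := by exact_mod_cast h0
      have hzne : z ≠ 0 := by
        intro h
        apply hne
        rw [h]
        norm_num
      exact_mod_cast (by omega : (1 : ℤ) ≤ z)
    have hkr := k.isLt
    have hpairk : pairA r ν k = e k.val - e (k.val - 1) := by
      have hp := pairE_diff ν hk1 k.isLt
      rw [Fin.eta] at hp
      simp only [he]
      rw [show k.val - 1 + 1 = k.val from by omega]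
      exact hp
    have he1 : 1 ≤ e (k.val - 1) := by
      have h2 := pairν k
      rw [if_neg (by omega : ¬ k.val = 0)] at h2
      have h3 : 0 ≤ e k.val := hennneg k.val (by omega)
      rw [hpairk] at h2
      linarith
    have hEν1 : ∀ j, j ≤ k.val - 1 → 1 ≤ E r ν j := by
      intro j hj
      have hch := chain (E r ν) (k.val - 1) ?_ j hj
      · have base : 1 ≤ E r ν (k.val - 1) := by
          have hee : e (k.val - 1) = E r ν (k.val - 1) - E r ν (k.val - 1 + 1) := rfl
          rw [show k.val - 1 + 1 = k.val from by omega] at hee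
          have h4 : 0 ≤ E r ν k.val := by
            rw [E_lt ν k.isLt, Fin.eta]
            rw [hν k]
            exact hle k
          linarith
        linarith
      · intro j' hj1' hj2'
        have h5 : 0 ≤ e (j' - 1) := hennneg (j' - 1) (by omega)
        have hee : e (j' - 1) = E r ν (j' - 1) - E r ν (j' - 1 + 1) := rfl
        rw [show j' - 1 + 1 = j' from by omega] at hee
        linarith
    exact contra_step n μ ⟨k.val - 1, by omega⟩ hdom hwt hle
      (fun m hm => by
        have hmk : m = k := Fin.ext (by simp at hm ⊢; omega)
        rw [hmk]
        exact hk1')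
      (fun idx hidx => by
        have h6 := hEν1 idx.val (by simpa using hidx)
        rw [E_lt ν idx.isLt, Fin.eta, hν idx] at h6
        exact h6)
      hmax
  have hrec := recon μ hpzero
  set d := E r μ (r - 1) with hd
  have hE : ∀ kk : ℕ, kk ≤ r → E r μ kk = ((r : ℚ) - kk) * d := by
    intro kk hkk
    have h7 := hrec (r - kk) (by omega)
    rw [show r - (r - kk) = kk from by omega] at h7
    rw [h7]
    push_cast [hkk]
    ring
  have hcoords : ∀ idx : Fin r, μ idx = ((r : ℚ) - idx.val) * d := by
    intro idx
    have h8 := hE idx.val idx.isLt.le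
    rwa [E_lt μ idx.isLt, Fin.eta] at h8
  have h0r : 0 < r := by omega
  have hp0 : pairA r μ ⟨0, h0r⟩ = ((r : ℚ) + 1) * d := by
    have h01 : pairA r μ ⟨0, h0r⟩ = 2 * E r μ 0 - 0 - E r μ 1 := by
      rw [pairE]
      norm_num
    rw [h01, hE 0 (by omega), hE 1 (by omega)]
    push_cast
    ring
  have hrpos : (0 : ℚ) < (r : ℚ) + 1 := by positivity
  have hub : ((r : ℚ) + 1) * d ≤ (n : ℚ) := by
    have h1 := hle ⟨r - 1, hrlt⟩
    have h2 : μ ⟨r - 1, hrlt⟩ = 1 * d := by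
      rw [hcoords]
      congr 1
      have : ((r - 1 : ℕ) : ℚ) = (r : ℚ) - 1 := by push_cast [hr]; ring
      rw [show ((⟨r - 1, hrlt⟩ : Fin r) : ℕ) = r - 1 from rfl, this]
      ring
    have h3 : omegaOne r ⟨r - 1, hrlt⟩ = 1 / ((r : ℚ) + 1) := by
      unfold omegaOne
      have : ((r - 1 : ℕ) : ℚ) = (r : ℚ) - 1 := by push_cast [hr]; ring
      rw [show ((⟨r - 1, hrlt⟩ : Fin r) : ℕ) = r - 1 from rfl, this]
      ring_nf
    rw [h2, h3] at h1
    have h5 : ((r : ℚ) + 1) * ((n : ℚ) * (1 / ((r : ℚ) + 1)) - 1 * d)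
        = (n : ℚ) - ((r : ℚ) + 1) * d := by
      field_simp
    have h6 : 0 ≤ ((r : ℚ) + 1) * ((n : ℚ) * (1 / ((r : ℚ) + 1)) - 1 * d) :=
      mul_nonneg hrpos.le h1
    rw [h5] at h6
    linarith
  obtain ⟨z, hz⟩ := hwt ⟨0, h0r⟩
  have hz0 : 0 ≤ z := by
    have := hdom ⟨0, h0r⟩
    rw [hz] at this
    exact_mod_cast this
  have hzn : z ≤ (n : ℤ) := by
    have : (z : ℚ) ≤ (n : ℚ) := by rw [← hz, hp0]; exact hub
    exact_mod_cast this
  have hzd : (z : ℚ) = ((r : ℚ) + 1) * d := by rw [← hz, hp0]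
  refine ⟨n - z.toNat, ?_, ?_⟩
  · rw [le_min_iff]
    refine ⟨by omega, ?_⟩
    by_contra hgt
    push_neg at hgt
    have hzsmall : (z : ℚ) ≤ (n : ℚ) - ((r : ℚ) + 1) := by
      have h9 : (z : ℤ) ≤ (n : ℤ) - (r : ℤ) - 1 := by omega
      have : (z : ℚ) ≤ (n : ℚ) - (r : ℚ) - 1 := by exact_mod_cast h9
      linarith
    have hν1 : ∀ idx : Fin r, 1 ≤ (n : ℚ) * omegaOne r idx - μ idx := by
      intro idx
      rw [hcoords idx]
      have ht : (1 : ℚ) ≤ (r : ℚ) - idx.val := by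
        have : (idx.val : ℚ) + 1 ≤ (r : ℚ) := by exact_mod_cast idx.isLt
        linarith
      have hA : (r : ℚ) + 1 ≤ (n : ℚ) - ((r : ℚ) + 1) * d := by
        rw [← hzd]
        linarith
      unfold omegaOne
      rw [show (n : ℚ) * (((r : ℚ) - idx.val) / ((r : ℚ) + 1)) - ((r : ℚ) - idx.val) * d
          = (((r : ℚ) - idx.val) * ((n : ℚ) - ((r : ℚ) + 1) * d)) / ((r : ℚ) + 1) from by
        field_simp]
      rw [le_div_iff₀ hrpos]
      nlinarith
    exact contra_step n μ ⟨r - 1, hrlt⟩ hdom hwt hle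
      (fun m hm => by
        have := m.isLt
        simp at hm
        omega)
      (fun idx _ => hν1 idx)
      hmax
  · funext idx
    have h10 : n - (n - z.toNat) = z.toNat := by omega
    simp only [Pi.smul_apply, smul_eq_mul, h10]
    have h11 : ((z.toNat : ℕ) : ℚ) = (z : ℚ) := by
      exact_mod_cast Int.toNat_of_nonneg hz0
    rw [h11, hzd, hcoords idx]
    unfold omegaOne
    field_simp

end AuxMax

theorem maximal_elements_n_omega_one
    (r n : ℕ) (hr : 1 ≤ r) (hn : 1 ≤ n) :
    {μ : Fin r → ℚ |
        (IsDomA r μ ∧ IsWtA r μ ∧ (∀ i, 0 ≤ (n : ℚ) * omegaOne r i - μ i)) ∧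
        (∀ μ' : Fin r → ℚ,
          (IsDomA r μ' ∧ IsWtA r μ' ∧ (∀ i, 0 ≤ (n : ℚ) * omegaOne r i - μ' i)) →
          InNatSpanA (PhiPlusOmegaOne r) (μ' - μ) → μ' = μ)} =
      {μ : Fin r → ℚ | ∃ i : ℕ, i ≤ min n r ∧ μ = ((n - i : ℕ) : ℚ) • omegaOne r} := by
  ext μ
  simp only [Set.mem_setOf_eq]
  constructor
  · rintro ⟨⟨hdom, hwt, hle⟩, hmax⟩
    exact AuxMax.forward hr μ hdom hwt hle hmax
  · rintro ⟨i, hi, rfl⟩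
    obtain ⟨h1, h2⟩ := AuxMax.backward hr i hi
    exact ⟨h1, h2⟩
end
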